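/- arXiv:1201.5186 — 3 statements merged into one kernel-verified Lean document; each statement's English description precedes it below -/
import Mathlib

section
/- Let p : ℂ → ℂ be a polynomial map of degree at least 2, let m ≥ 1 be an integer, and let K ⊆ ℂ be a nonempty compact set such that p^[m] maps K into K and ‖(p^[m])'(z)‖ > 1 for every z ∈ K. Then K is contained in the Julia set of p, i.e. in the topological frontier of the set of points whose forward orbit under p is bounded. -/
/-!
Points of the filled Julia set stay in a fixed disc, since `p` at least doubles the norm far
out. A point `z` of `K` has a bounded orbit because its `p`-orbit runs through the finitely many
compact sets `p^[s] '' K`, `s < m`. If `z` were interior to the filled Julia set, the iterates of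
`g = p^[m]` would be uniformly bounded on a disc around `z`, so by Cauchy's estimate
`‖(g^[n])'(z)‖` would be bounded; but by the chain rule it is at least `c ^ n`, where `c > 1` is
the minimum of `‖g'‖` on the compact, `g`-invariant set `K`.
-/

open Metric Set Filter Topology Polynomial

def filledJuliaSet {X : Type*} [Bornology X] (f : X → X) : Set X :=
  {z | Bornology.IsBounded (range fun n : ℕ => f^[n] z)}

section FilledJuliaSet

variable {X : Type*}

theorem iterate_mem_filledJuliaSet [Bornology X] {f : X → X} {z : X}
    (hz : z ∈ filledJuliaSet f) (j : ℕ) : f^[j] z ∈ filledJuliaSet f := by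
  refine Bornology.IsBounded.subset hz ?_
  rintro _ ⟨n, rfl⟩
  exact ⟨n + j, Function.iterate_add_apply f n j z⟩

theorem subset_filledJuliaSet_of_mapsTo_iterate [PseudoMetricSpace X] {f : X → X} {K : Set X}
    {m : ℕ} (hf : Continuous f) (hK : IsCompact K) (hm : 0 < m) (hmaps : MapsTo f^[m] K K) :
    K ⊆ filledJuliaSet f := by
  intro z hz
  have horbit : ∀ n, f^[n] z ∈ ⋃ s ∈ Finset.range m, f^[s] '' K := by
    intro n
    have hfold : f^[n] z = f^[n % m] ((f^[m])^[n / m] z) := by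
      rw [← Function.iterate_mul, ← Function.iterate_add_apply, Nat.mod_add_div]
    rw [hfold]
    exact mem_biUnion (Finset.mem_range.2 (Nat.mod_lt n hm))
      ⟨_, hmaps.iterate (n / m) hz, rfl⟩
  refine Bornology.IsBounded.subset ?_ (range_subset_iff.2 horbit)
  exact (Bornology.isBounded_biUnion_finset _).2 fun s _ => (hK.image (hf.iterate s)).isBounded

theorem filledJuliaSet_subset_closedBall [SeminormedAddCommGroup X] {f : X → X} {R : ℝ}
    (hR₀ : 0 ≤ R) (hR : ∀ z, R ≤ ‖z‖ → 2 * ‖z‖ ≤ ‖f z‖) :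
    filledJuliaSet f ⊆ closedBall 0 R := by
  intro z hz
  rw [mem_closedBall_zero_iff]
  by_contra! hzR
  have hgrowth : ∀ n : ℕ, 2 ^ n * ‖z‖ ≤ ‖f^[n] z‖ := by
    intro n
    induction n with
    | zero => simp
    | succ k ih =>
      have hk : R ≤ ‖f^[k] z‖ :=
        hzR.le.trans ((le_mul_of_one_le_left (norm_nonneg z) (one_le_pow₀ one_le_two)).trans ih)
      rw [Function.iterate_succ_apply']
      calc 2 ^ (k + 1) * ‖z‖ = 2 * (2 ^ k * ‖z‖) := by ring
        _ ≤ 2 * ‖f^[k] z‖ := by gcongr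
        _ ≤ ‖f (f^[k] z)‖ := hR _ hk
  have hescape : Tendsto (fun n : ℕ => 2 ^ n * ‖z‖) atTop atTop :=
    (tendsto_pow_atTop_atTop_of_one_lt one_lt_two).atTop_mul_const (hR₀.trans_lt hzR)
  obtain ⟨C, hC⟩ := isBounded_iff_forall_norm_le.1 hz
  obtain ⟨n, hn⟩ := (hescape.eventually_gt_atTop C).exists
  exact (hn.trans_le (hgrowth n)).not_ge (hC _ ⟨n, rfl⟩)

end FilledJuliaSet

namespace Polynomial

theorem eventually_two_mul_norm_le_norm_eval {p : ℂ[X]} (hp : 2 ≤ p.natDegree) :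
    ∀ᶠ z in comap norm atTop, 2 * ‖z‖ ≤ ‖p.eval z‖ := by
  have hdivX : 0 < p.divX.degree := by
    have : 1 ≤ p.divX.natDegree := by rw [natDegree_divX_eq_natDegree_tsub_one]; omega
    exact natDegree_pos_iff_degree_pos.1 this
  filter_upwards [(p.divX.tendsto_norm_atTop hdivX tendsto_comap).eventually_ge_atTop 3,
    tendsto_comap.eventually_ge_atTop ‖p.coeff 0‖] with z hq hz
  have hsplit : p.eval z = z * p.divX.eval z + p.coeff 0 := by
    conv_lhs => rw [← p.X_mul_divX_add]
    rw [eval_add, eval_mul, eval_X, eval_C]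
  rw [hsplit]
  calc 2 * ‖z‖ = 3 * ‖z‖ - ‖z‖ := by ring
    _ ≤ ‖z‖ * ‖p.divX.eval z‖ - ‖p.coeff 0‖ := by nlinarith [norm_nonneg z]
    _ = ‖z * p.divX.eval z‖ - ‖-p.coeff 0‖ := by rw [norm_mul, norm_neg]
    _ ≤ ‖z * p.divX.eval z + p.coeff 0‖ := by
      simpa using norm_sub_norm_le (z * p.divX.eval z) (-p.coeff 0)

theorem exists_filledJuliaSet_subset_closedBall {p : ℂ[X]} (hp : 2 ≤ p.natDegree) :
    ∃ R, filledJuliaSet (fun z => p.eval z) ⊆ closedBall 0 R := by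
  obtain ⟨R, hR⟩ :=
    eventually_atTop.1 (eventually_comap.1 (eventually_two_mul_norm_le_norm_eval hp))
  exact ⟨max R 0, filledJuliaSet_subset_closedBall (le_max_right R 0)
    fun z hz => hR _ ((le_max_left R 0).trans hz) z rfl⟩

end Polynomial

section Expansion

variable {𝕜 : Type*} [NontriviallyNormedField 𝕜] {g : 𝕜 → 𝕜} {K : Set 𝕜}

theorem deriv_iterate_eq_prod (hg : Differentiable 𝕜 g) (n : ℕ) (z : 𝕜) :
    deriv g^[n] z = ∏ i ∈ Finset.range n, deriv g (g^[i] z) := by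
  induction n generalizing z with
  | zero => simp
  | succ k ih =>
    rw [Function.iterate_succ', Finset.prod_range_succ, deriv_comp z (hg _) (hg.iterate k _), ih,
      mul_comm]

theorem pow_le_norm_deriv_iterate (hg : Differentiable 𝕜 g) (hmaps : MapsTo g K K) {c : ℝ}
    (hc : 0 ≤ c) (hexp : ∀ z ∈ K, c ≤ ‖deriv g z‖) {z : 𝕜} (hz : z ∈ K) (n : ℕ) :
    c ^ n ≤ ‖deriv g^[n] z‖ := by
  rw [deriv_iterate_eq_prod hg, norm_prod]
  calc c ^ n = ∏ _i ∈ Finset.range n, c := by simp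
    _ ≤ ∏ i ∈ Finset.range n, ‖deriv g (g^[i] z)‖ :=
      Finset.prod_le_prod (fun _ _ => hc) fun i _ => hexp _ (hmaps.iterate i hz)

end Expansion

theorem Complex.tendsto_norm_deriv_iterate_atTop {g : ℂ → ℂ} {K : Set ℂ}
    (hg : Differentiable ℂ g) (hK : IsCompact K) (hmaps : MapsTo g K K)
    (hexp : ∀ z ∈ K, 1 < ‖deriv g z‖) {z : ℂ} (hz : z ∈ K) :
    Tendsto (fun n => ‖deriv g^[n] z‖) atTop atTop := by
  obtain ⟨c, hc, hcK⟩ := hK.exists_forall_le' hg.deriv.continuous.norm.continuousOn hexp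
  exact tendsto_atTop_mono (pow_le_norm_deriv_iterate hg hmaps (zero_le_one.trans hc.le) hcK hz)
    (tendsto_pow_atTop_atTop_of_one_lt hc)

theorem stmt4_general (p : Polynomial ℂ) (hp : 2 ≤ p.natDegree) (m : ℕ) (hm : 1 ≤ m)
    (K : Set ℂ) (hKc : IsCompact K)
    (hinv : Set.MapsTo ((fun z => p.eval z)^[m]) K K)
    (hexp : ∀ z ∈ K, 1 < ‖deriv ((fun z => p.eval z)^[m]) z‖) :
    K ⊆ frontier {z : ℂ |
      Bornology.IsBounded (Set.range fun n : ℕ => (fun z => p.eval z)^[n] z)} := by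
  set f : ℂ → ℂ := fun z => p.eval z
  change K ⊆ frontier (filledJuliaSet f)
  obtain ⟨R, hR⟩ := exists_filledJuliaSet_subset_closedBall hp
  have hKS : K ⊆ filledJuliaSet f :=
    subset_filledJuliaSet_of_mapsTo_iterate p.continuous hKc hm hinv
  have hg : Differentiable ℂ f^[m] := p.differentiable.iterate m
  intro z hz
  refine ⟨subset_closure (hKS hz), fun hzint => ?_⟩
  obtain ⟨r, hr, hball⟩ := nhds_basis_closedBall.mem_iff.1 (mem_interior_iff_mem_nhds.1 hzint)
  have hcauchy : ∀ n, ‖deriv (f^[m])^[n] z‖ ≤ R / r := fun n =>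
    Complex.norm_deriv_le_of_forall_mem_sphere_norm_le hr (hg.iterate n).diffContOnCl
      fun w hw => by
        rw [← Function.iterate_mul, ← mem_closedBall_zero_iff]
        exact hR (iterate_mem_filledJuliaSet (hball (sphere_subset_closedBall hw)) _)
  obtain ⟨n, hn⟩ :=
    ((Complex.tendsto_norm_deriv_iterate_atTop hg hKc hinv hexp hz).eventually_gt_atTop _).exists
  exact (hcauchy n).not_gt hn

theorem stmt4 (p : Polynomial ℂ) (hp : 2 ≤ p.natDegree) (m : ℕ) (hm : 1 ≤ m)
    (K : Set ℂ) (hKne : K.Nonempty) (hKc : IsCompact K)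
    (hinv : Set.MapsTo ((fun z => p.eval z)^[m]) K K)
    (hexp : ∀ z ∈ K, 1 < ‖deriv ((fun z => p.eval z)^[m]) z‖) :
    K ⊆ frontier {z : ℂ |
      Bornology.IsBounded (Set.range fun n : ℕ => (fun z => p.eval z)^[n] z)} :=
  stmt4_general p hp m hm K hKc hinv hexp
end

section
/- Let α ∈ ℂ, let a, b ∈ ℂ with a ≠ 0, and let F be holomorphic on a neighborhood of α with F(z) = z + a(z−α)² + b(z−α)³ + O((z−α)⁴) as z → α. Set A = 1 − b/a², and define I(z) = −1/(a(z−α)), so that I⁻¹(w) = α − 1/(a·w). Then there exist R > 0 and C > 0 such that for every w ∈ ℂ with |w| ≥ R, the point I⁻¹(w) lies in the domain of F, F(I⁻¹(w)) ≠ α, and |I(F(I⁻¹(w))) − w − 1 − A/w| ≤ C/|w|². -/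
/-!
Write `q = 1/w`, so that `u := I⁻¹(w) - α = -q/a`. The expansion of `F` gives
`a (F(α + u) - α) = -q D` with `D = 1 - q + (b/a²) q² - (h/a³) q³` (this is `perturbedFactor`),
hence `I(F(I⁻¹ w)) = w / D`. Expanding `1/D` to second order,
`w / D = w + 1 + (1 - b/a²) q + q² N / D` where `N` is quadratic in `q` with coefficients bounded
as soon as `h` is bounded near `α`; for `|w|` large `|D| ≥ 1/2`, giving the `O(1/|w|²)` error.
-/

noncomputable def perturbedFactor (β γ w : ℂ) : ℂ := 1 - 1 / w + β / w ^ 2 - γ / w ^ 3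

section PerturbedInverse

variable {β γ w : ℂ} {c : ℝ}

lemma norm_perturbedFactor_sub_one_le (hw : 1 ≤ ‖w‖) :
    ‖perturbedFactor β γ w - 1‖ ≤ (1 + ‖β‖ + ‖γ‖) / ‖w‖ := by
  have hw0 : 0 < ‖w‖ := by linarith
  have h2 : ‖w‖ ≤ ‖w‖ ^ 2 := by nlinarith
  have h3 : ‖w‖ ≤ ‖w‖ ^ 3 := by nlinarith
  calc ‖perturbedFactor β γ w - 1‖ = ‖-(1 / w) + β / w ^ 2 - γ / w ^ 3‖ := by
        rw [perturbedFactor]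
        ring_nf
    _ ≤ ‖1 / w‖ + ‖β / w ^ 2‖ + ‖γ / w ^ 3‖ := by
        refine (norm_sub_le _ _).trans (add_le_add_left ((norm_add_le _ _).trans ?_) _)
        rw [norm_neg]
    _ = 1 / ‖w‖ + ‖β‖ / ‖w‖ ^ 2 + ‖γ‖ / ‖w‖ ^ 3 := by simp only [norm_div, norm_one, norm_pow]
    _ ≤ 1 / ‖w‖ + ‖β‖ / ‖w‖ + ‖γ‖ / ‖w‖ := by gcongr
    _ = (1 + ‖β‖ + ‖γ‖) / ‖w‖ := by ring

lemma div_perturbedFactor_sub_eq (hw : w ≠ 0) (hD : perturbedFactor β γ w ≠ 0) :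
    w / perturbedFactor β γ w - w - 1 - (1 - β) / w =
      ((1 - 2 * β + γ) + (γ - β * (1 - β)) / w + γ * (1 - β) / w ^ 2) /
        (perturbedFactor β γ w * w ^ 2) := by
  have hN : w - perturbedFactor β γ w * (w + 1 + (1 - β) / w) =
      ((1 - 2 * β + γ) + (γ - β * (1 - β)) / w + γ * (1 - β) / w ^ 2) / w ^ 2 := by
    rw [perturbedFactor]
    field_simp
    ring
  rw [sub_sub, sub_sub, ← add_assoc, div_sub' hD, hN, div_div, mul_comm (w ^ 2)]

lemma norm_perturbedFactor_remainder_le (hc : 1 + ‖β‖ + ‖γ‖ ≤ c) (hw : 1 ≤ ‖w‖) :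
    ‖(1 - 2 * β + γ) + (γ - β * (1 - β)) / w + γ * (1 - β) / w ^ 2‖ ≤ 4 * c ^ 2 := by
  have hβ := norm_nonneg β
  have hγ := norm_nonneg γ
  have h1β : ‖1 - β‖ ≤ 1 + ‖β‖ := (norm_sub_le _ _).trans (by rw [norm_one])
  have e0 : ‖1 - 2 * β + γ‖ ≤ 1 + 2 * ‖β‖ + ‖γ‖ := by
    refine (norm_add_le _ _).trans (add_le_add_left ((norm_sub_le _ _).trans ?_) _)
    simp
  have e1 : ‖(γ - β * (1 - β)) / w‖ ≤ ‖γ‖ + ‖β‖ * (1 + ‖β‖) := by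
    rw [norm_div]
    refine (div_le_self (norm_nonneg _) hw).trans ((norm_sub_le _ _).trans ?_)
    rw [norm_mul]
    gcongr
  have e2 : ‖γ * (1 - β) / w ^ 2‖ ≤ ‖γ‖ * (1 + ‖β‖) := by
    rw [norm_div, norm_mul, norm_pow]
    refine (div_le_self (by positivity) (one_le_pow₀ hw)).trans ?_
    gcongr
  calc _ ≤ ‖1 - 2 * β + γ‖ + ‖(γ - β * (1 - β)) / w‖ + ‖γ * (1 - β) / w ^ 2‖ :=
        norm_add₃_le
    _ ≤ 4 * c ^ 2 := by nlinarith

theorem norm_div_perturbedFactor_sub_le (hc : 1 + ‖β‖ + ‖γ‖ ≤ c) (hw : 2 * c ≤ ‖w‖) :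
    perturbedFactor β γ w ≠ 0 ∧
      ‖w / perturbedFactor β γ w - w - 1 - (1 - β) / w‖ ≤
        8 * c ^ 2 / ‖w‖ ^ 2 := by
  have hc1 : 1 ≤ c := by linarith [norm_nonneg β, norm_nonneg γ]
  have hw1 : 1 ≤ ‖w‖ := by linarith
  have hw0 : w ≠ 0 := norm_pos_iff.mp (by linarith)
  have hclose : ‖perturbedFactor β γ w - 1‖ ≤ 1 / 2 := by
    refine (norm_perturbedFactor_sub_one_le hw1).trans ?_
    rw [div_le_iff₀ (by linarith)]
    linarith
  have hD : 1 / 2 ≤ ‖perturbedFactor β γ w‖ := by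
    have := norm_sub_norm_le (1 : ℂ) (1 - perturbedFactor β γ w)
    rw [norm_sub_rev, norm_one, sub_sub_cancel] at this
    linarith
  have hD0 : perturbedFactor β γ w ≠ 0 := norm_pos_iff.mp (by linarith)
  refine ⟨hD0, ?_⟩
  rw [div_perturbedFactor_sub_eq hw0 hD0, norm_div, norm_mul, norm_pow,
    div_le_div_iff₀ (by positivity) (by positivity)]
  have hN := norm_perturbedFactor_remainder_le hc hw1
  have hw2 : 0 ≤ ‖w‖ ^ 2 := by positivity
  nlinarith [mul_le_mul_of_nonneg_right hN hw2, mul_le_mul_of_nonneg_right hD hw2]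

end PerturbedInverse

lemma mul_expansion_at_neg_inv (a b H w : ℂ) (ha : a ≠ 0) (hw : w ≠ 0) :
    a * (-(1 / (a * w)) + a * (-(1 / (a * w))) ^ 2 + b * (-(1 / (a * w))) ^ 3 +
        H * (-(1 / (a * w))) ^ 4) =
      -(perturbedFactor (b / a ^ 2) (H / a ^ 3) w / w) := by
  rw [perturbedFactor]
  field_simp
  ring

theorem stmt6_general (α a b : ℂ) (ha : a ≠ 0) (U : Set ℂ) (hU : IsOpen U) (hα : α ∈ U)
    (F h : ℂ → ℂ) (hh : DifferentiableOn ℂ h U)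
    (hexp : ∀ z ∈ U,
      F z = z + a * (z - α) ^ 2 + b * (z - α) ^ 3 + h z * (z - α) ^ 4) :
    ∃ R > (0 : ℝ), ∃ C > (0 : ℝ), ∀ w : ℂ, R ≤ ‖w‖ →
      α - 1 / (a * w) ∈ U ∧
      F (α - 1 / (a * w)) ≠ α ∧
      ‖-1 / (a * (F (α - 1 / (a * w)) - α)) - w - 1 - (1 - b / a ^ 2) / w‖
        ≤ C / ‖w‖ ^ 2 := by
  obtain ⟨r, hr, hloc⟩ : ∃ r > 0, ∀ z, dist z α < r → z ∈ U ∧ ‖h z‖ ≤ ‖h α‖ + 1 := by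
    have hbdd := (hh.continuousOn.continuousAt (hU.mem_nhds hα)).norm.eventually
      (gt_mem_nhds (lt_add_one _))
    exact Metric.eventually_nhds_iff.mp
      (((hU.eventually_mem hα).and hbdd).mono fun z hz => ⟨hz.1, hz.2.le⟩)
  have ha0 : 0 < ‖a‖ := norm_pos_iff.mpr ha
  set c := 1 + ‖b / a ^ 2‖ + (‖h α‖ + 1) / ‖a‖ ^ 3
  refine ⟨max (2 * c) (2 / (‖a‖ * r)), by positivity, 8 * c ^ 2, by positivity, fun w hw => ?_⟩
  have hwc : 2 * c ≤ ‖w‖ := le_of_max_le_left hw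
  have hwr : 2 / (‖a‖ * r) ≤ ‖w‖ := le_of_max_le_right hw
  have hw0 : w ≠ 0 := norm_pos_iff.mp (lt_of_lt_of_le (by positivity) hwc)
  set z := α - 1 / (a * w)
  have hzα : z - α = -(1 / (a * w)) := sub_sub_cancel_left _ _
  obtain ⟨hzU, hhz⟩ := hloc z (by
    rw [dist_eq_norm, hzα, norm_neg, norm_div, norm_one, norm_mul, div_lt_iff₀ (by positivity)]
    rw [div_le_iff₀ (by positivity)] at hwr
    nlinarith)
  have hc : 1 + ‖b / a ^ 2‖ + ‖h z / a ^ 3‖ ≤ c := by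
    simp only [c, norm_div, norm_pow]
    gcongr
  obtain ⟨hD, hbound⟩ := norm_div_perturbedFactor_sub_le hc hwc
  have hFz : a * (F z - α) = -(perturbedFactor (b / a ^ 2) (h z / a ^ 3) w / w) := by
    rw [← mul_expansion_at_neg_inv a b (h z) w ha hw0, ← hzα, hexp z hzU]
    ring
  refine ⟨hzU, fun hFα => ?_, ?_⟩
  · rw [hFα, sub_self, mul_zero, eq_comm, neg_eq_zero, div_eq_zero_iff] at hFz
    exact hFz.elim hD hw0
  · rwa [hFz, neg_div_neg_eq, one_div_div]

theorem stmt6 (α a b : ℂ) (ha : a ≠ 0) (U : Set ℂ) (hU : IsOpen U) (hα : α ∈ U)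
    (F h : ℂ → ℂ) (hF : DifferentiableOn ℂ F U) (hh : DifferentiableOn ℂ h U)
    (hexp : ∀ z ∈ U,
      F z = z + a * (z - α) ^ 2 + b * (z - α) ^ 3 + h z * (z - α) ^ 4) :
    ∃ R > (0 : ℝ), ∃ C > (0 : ℝ), ∀ w : ℂ, R ≤ ‖w‖ →
      α - 1 / (a * w) ∈ U ∧
      F (α - 1 / (a * w)) ≠ α ∧
      ‖-1 / (a * (F (α - 1 / (a * w)) - α)) - w - 1 - (1 - b / a ^ 2) / w‖
        ≤ C / ‖w‖ ^ 2 :=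
  stmt6_general α a b ha U hU hα F h hh hexp
end

section
/- Let τ ∈ ℂ with Im τ > 0, let R, M > 0 with 2M ≤ R·min(1, Im τ), and let Σ ⊆ ℂ be a set with |w| ≥ R for all w ∈ Σ. Suppose F : Σ → Σ and G : Σ → Σ satisfy |F(w) − w − 1| ≤ M/|w| and |G(w) − w − τ| ≤ M/|w| for all w ∈ Σ. Then for every nonempty compact set K ⊆ Σ there exists C ≥ 1 such that for all integers n ≥ 1, r ≥ 0 and all w ∈ K: C⁻¹·|r + n·τ| ≤ |F^[r](G^[n](w))| ≤ C·|r + n·τ|. -/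
/-!
A step of `F` (resp. `G`) has error `M / ‖w‖`, which is at most `δ` once `‖w‖ ≥ M / δ` and at
most `M / R ≤ 1 / 2` (resp. `Im τ / 2`) always, so along an orbit the real (resp. imaginary) part
increases by at least `1 / 2` (resp. `Im τ / 2`) per step. Hence only boundedly many steps start
in the ball of radius `M / δ`, and after `N` steps the accumulated error is `N δ + O(1)`. Since
`n + r = O(‖r + n τ‖)`, a small `δ` gives `F^[r] (G^[n] w) = w + r + n τ + e` with
`‖e‖ ≤ ‖r + n τ‖ / 2 + O(1)`, and `‖r + n τ‖ ≥ Im τ`, `‖F^[r] (G^[n] w)‖ ≥ R` absorb the `O(1)`.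
-/

open Finset Set

theorem card_filter_abs_le_mul_le {s : ℕ → ℝ} {h ρ : ℝ} (N : ℕ) (hh : 0 < h) (hρ : 0 ≤ ρ)
    (hs : ∀ k < N, s k + h ≤ s (k + 1)) :
    #{k ∈ range N | |s k| ≤ ρ} * h ≤ 2 * ρ + h := by
  -- Clamping `s` to `[-ρ, ρ + h]` keeps it monotone, and each step that starts in `[-ρ, ρ]`
  -- raises the clamped value by the full `h`.
  set g : ℝ → ℝ := fun x => max (-ρ) (min x (ρ + h))
  have hg_mono : Monotone g := fun x y hxy => max_le_max le_rfl (min_le_min hxy le_rfl)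
  have hg_eq : ∀ x, -ρ ≤ x → x ≤ ρ + h → g x = x := fun x h₁ h₂ => by
    simp only [g, min_eq_left h₂, max_eq_right h₁]
  have hstep : ∀ k < N, (if |s k| ≤ ρ then h else 0) ≤ g (s (k + 1)) - g (s k) := by
    intro k hk
    have hmono := hg_mono (show s k ≤ s (k + 1) by linarith [hs k hk])
    split_ifs with hnear
    · obtain ⟨hlo, hhi⟩ := abs_le.mp hnear
      have := hg_mono (hs k hk)
      rw [hg_eq _ (by linarith) (by linarith)] at this
      rw [hg_eq _ hlo (by linarith)]
      linarith
    · linarith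
  calc #{k ∈ range N | |s k| ≤ ρ} * h = ∑ k ∈ range N, if |s k| ≤ ρ then h else 0 := by
        rw [← sum_filter, sum_const, nsmul_eq_mul]
    _ ≤ ∑ k ∈ range N, (g (s (k + 1)) - g (s k)) :=
        sum_le_sum fun k hk => hstep k (mem_range.mp hk)
    _ = g (s N) - g (s 0) := sum_range_sub (fun k => g (s k)) N
    _ ≤ 2 * ρ + h := by
        have : -ρ ≤ g (s 0) := le_max_left _ _
        have : g (s N) ≤ ρ + h := max_le (by linarith) (min_le_right _ _)
        linarith

section Drift

variable {E : Type*} [SeminormedAddCommGroup E]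

theorem norm_sub_sub_nsmul_le_sum (u : ℕ → E) (d : E) (N : ℕ) :
    ‖u N - u 0 - N • d‖ ≤ ∑ k ∈ range N, ‖u (k + 1) - u k - d‖ := by
  have htel : u N - u 0 - N • d = ∑ k ∈ range N, (u (k + 1) - u k - d) := by
    rw [sum_sub_distrib, sum_range_sub, sum_const, card_range]
  rw [htel]
  exact norm_sum_le _ _

variable [NormedSpace ℝ E]

theorem exists_norm_iterate_sub_nsmul_le {S : Set E} {R M h : ℝ} {H : E → E} {d : E}
    (φ : E →L[ℝ] ℝ) (hR : 0 < R) (hM : 0 ≤ M) (hh : 0 < h) (hφ : ‖φ‖ ≤ 1)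
    (hφd : M / R + h ≤ φ d) (hS : ∀ w ∈ S, R ≤ ‖w‖) (hHS : MapsTo H S S)
    (hH : ∀ w ∈ S, ‖H w - w - d‖ ≤ M / ‖w‖) {δ : ℝ} (hδ : 0 < δ) :
    ∃ A, 0 ≤ A ∧ ∀ w ∈ S, ∀ N : ℕ, ‖H^[N] w - w - N • d‖ ≤ N * δ + A := by
  refine ⟨(2 * (M / δ) + h) / h * (M / R), by positivity, fun w hw N => ?_⟩
  set z : ℕ → E := fun k => H^[k] w
  have hz_norm : ∀ k, R ≤ ‖z k‖ := fun k => hS _ (hHS.iterate k hw)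
  have hz_pos : ∀ k, 0 < ‖z k‖ := fun k => hR.trans_le (hz_norm k)
  have hφ_le : ∀ x, |φ x| ≤ ‖x‖ := fun x => by
    simpa using φ.le_of_opNorm_le hφ x
  have hstep : ∀ k, ‖z (k + 1) - z k - d‖ ≤ M / ‖z k‖ := fun k => by
    simpa only [z, Function.iterate_succ_apply'] using hH _ (hHS.iterate k hw)
  have hstep_le : ∀ k, M / ‖z k‖ ≤ M / R := fun k => div_le_div_of_nonneg_left hM hR (hz_norm k)
  have hphase : ∀ k, φ (z k) + h ≤ φ (z (k + 1)) := fun k => by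
    have hlin : φ (z (k + 1)) = φ (z k) + φ d + φ (z (k + 1) - z k - d) := by
      simp only [map_sub]; ring
    have := (abs_le.mp (hφ_le (z (k + 1) - z k - d))).1
    linarith [hstep k, hstep_le k]
  have hterm : ∀ k, M / ‖z k‖ ≤ δ + if |φ (z k)| ≤ M / δ then M / R else 0 := fun k => by
    split_ifs with hnear
    · linarith [hstep_le k]
    · have hfar : M / δ < ‖z k‖ := (not_le.mp hnear).trans_le (hφ_le _)
      rw [div_lt_iff₀ hδ] at hfar
      rw [add_zero, div_le_iff₀ (hz_pos k)]
      linarith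
  have hcount := card_filter_abs_le_mul_le (s := fun k => φ (z k)) N hh
    (div_nonneg hM hδ.le) fun k _ => hphase k
  calc ‖H^[N] w - w - N • d‖ ≤ ∑ k ∈ range N, ‖z (k + 1) - z k - d‖ :=
        norm_sub_sub_nsmul_le_sum z d N
    _ ≤ ∑ k ∈ range N, (δ + if |φ (z k)| ≤ M / δ then M / R else 0) :=
        sum_le_sum fun k _ => (hstep k).trans (hterm k)
    _ = N * δ + #{k ∈ range N | |φ (z k)| ≤ M / δ} * (M / R) := by
        rw [sum_add_distrib, ← sum_filter, sum_const, sum_const, card_range, nsmul_eq_mul,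
          nsmul_eq_mul]
    _ ≤ N * δ + (2 * (M / δ) + h) / h * (M / R) := by
        have hcard := (le_div_iff₀ hh).mpr hcount
        gcongr

end Drift

theorem norm_comparable_of_norm_sub_le {E : Type*} [SeminormedAddCommGroup E] {z X : E}
    {t R D : ℝ} (ht : 0 < t) (hR : 0 < R) (hD : 0 ≤ D) (hX : t ≤ ‖X‖) (hz : R ≤ ‖z‖)
    (hzX : ‖z - X‖ ≤ ‖X‖ / 2 + D) :
    (2 + D / t + 2 * D / R)⁻¹ * ‖X‖ ≤ ‖z‖ ∧ ‖z‖ ≤ (2 + D / t + 2 * D / R) * ‖X‖ := by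
  have hDt : D ≤ D / t * ‖X‖ := by
    rw [div_mul_eq_mul_div, le_div_iff₀ ht]; exact mul_le_mul_of_nonneg_left hX hD
  have hDR : 2 * D ≤ 2 * D / R * ‖z‖ := by
    rw [div_mul_eq_mul_div, le_div_iff₀ hR]; exact mul_le_mul_of_nonneg_left hz (by linarith)
  have hz_up := norm_le_norm_add_norm_sub' z X
  have hX_up := norm_le_norm_add_norm_sub z X
  constructor
  · rw [inv_mul_le_iff₀ (by positivity)]
    have : 0 ≤ D / t * ‖z‖ := by positivity
    linarith
  · have : 0 ≤ 2 * D / R * ‖X‖ := by positivity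
    linarith

theorem natCast_mul_im_le_norm (τ : ℂ) (n r : ℕ) : n * τ.im ≤ ‖(r : ℂ) + (n : ℂ) * τ‖ := by
  have := Complex.abs_im_le_norm ((r : ℂ) + (n : ℂ) * τ)
  simp only [Complex.add_im, Complex.natCast_im, Complex.mul_im, Complex.natCast_re, zero_mul,
    zero_add, add_zero] at this
  exact (le_abs_self _).trans this

theorem natCast_add_mul_im_le_norm {τ : ℂ} (hτ : 0 ≤ τ.im) (n r : ℕ) :
    ((n : ℝ) + r) * τ.im ≤ (1 + τ.im + ‖τ‖) * ‖(r : ℂ) + (n : ℂ) * τ‖ := by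
  set X : ℂ := (r : ℂ) + (n : ℂ) * τ
  have hn := natCast_mul_im_le_norm τ n r
  have hr : (r : ℝ) ≤ ‖X‖ + n * ‖τ‖ := by
    have := norm_sub_le X ((n : ℂ) * τ)
    rwa [show X - (n : ℂ) * τ = (r : ℂ) by ring, Complex.norm_natCast, norm_mul,
      Complex.norm_natCast] at this
  nlinarith [mul_le_mul_of_nonneg_right hr hτ, mul_le_mul_of_nonneg_right hn (norm_nonneg τ),
    norm_nonneg X]

theorem exists_norm_iterate_iterate_sub_le {τ : ℂ} (hτ : 0 < τ.im) {R M : ℝ} (hR : 0 < R)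
    (hM : 0 ≤ M) (hRM : 2 * M ≤ R * min 1 τ.im) {S : Set ℂ} (hS : ∀ w ∈ S, R ≤ ‖w‖)
    {F G : ℂ → ℂ} (hFS : MapsTo F S S) (hGS : MapsTo G S S)
    (hF : ∀ w ∈ S, ‖F w - w - 1‖ ≤ M / ‖w‖) (hG : ∀ w ∈ S, ‖G w - w - τ‖ ≤ M / ‖w‖)
    {δ : ℝ} (hδ : 0 < δ) :
    ∃ A, 0 ≤ A ∧ ∀ w ∈ S, ∀ n r : ℕ,
      ‖F^[r] (G^[n] w) - w - ((r : ℂ) + (n : ℂ) * τ)‖ ≤ (n + r) * δ + A := by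
  have hMR : M / R ≤ min 1 τ.im / 2 := by
    rw [div_le_div_iff₀ hR two_pos]; linarith
  obtain ⟨AF, hAF₀, hAF⟩ := exists_norm_iterate_sub_nsmul_le (d := 1) (h := 1 / 2) Complex.reCLM
    hR hM one_half_pos Complex.reCLM_norm.le
    (by rw [Complex.reCLM_apply, Complex.one_re]; linarith [min_le_left 1 τ.im]) hS hFS hF hδ
  obtain ⟨AG, hAG₀, hAG⟩ := exists_norm_iterate_sub_nsmul_le (d := τ) (h := τ.im / 2)
    Complex.imCLM hR hM (half_pos hτ) Complex.imCLM_norm.le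
    (by rw [Complex.imCLM_apply]; linarith [min_le_right 1 τ.im]) hS hGS hG hδ
  refine ⟨AG + AF, by positivity, fun w hw n r => ?_⟩
  have hsplit : F^[r] (G^[n] w) - w - ((r : ℂ) + (n : ℂ) * τ)
      = (F^[r] (G^[n] w) - G^[n] w - r • (1 : ℂ)) + (G^[n] w - w - n • τ) := by
    simp only [nsmul_eq_mul, mul_one]; ring
  rw [hsplit]
  linarith [norm_add_le (F^[r] (G^[n] w) - G^[n] w - r • (1 : ℂ)) (G^[n] w - w - n • τ),
    hAF _ (hGS.iterate n hw) r, hAG w hw n]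

theorem stmt7 (τ : ℂ) (hτ : 0 < τ.im) (R M : ℝ) (hR : 0 < R) (hM : 0 < M)
    (hRM : 2 * M ≤ R * min 1 τ.im) (S : Set ℂ) (hS : ∀ w ∈ S, R ≤ ‖w‖)
    (F G : ℂ → ℂ) (hFS : Set.MapsTo F S S) (hGS : Set.MapsTo G S S)
    (hF : ∀ w ∈ S, ‖F w - w - 1‖ ≤ M / ‖w‖)
    (hG : ∀ w ∈ S, ‖G w - w - τ‖ ≤ M / ‖w‖) :
    ∀ K : Set ℂ, K ⊆ S → K.Nonempty → IsCompact K →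
      ∃ C : ℝ, 1 ≤ C ∧ ∀ (n r : ℕ), 1 ≤ n → ∀ w ∈ K,
        C⁻¹ * ‖(r : ℂ) + (n : ℂ) * τ‖ ≤ ‖F^[r] (G^[n] w)‖ ∧
        ‖F^[r] (G^[n] w)‖ ≤ C * ‖(r : ℂ) + (n : ℂ) * τ‖ := by
  intro K hKS ⟨w₀, hw₀⟩ hK
  obtain ⟨B, hB⟩ := hK.isBounded.exists_norm_le
  set κ := 1 + τ.im + ‖τ‖
  have hκ : 0 < κ := by positivity
  obtain ⟨A, hA₀, hA⟩ := exists_norm_iterate_iterate_sub_le hτ hR hM.le hRM hS hFS hGS hF hG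
    (show 0 < τ.im / (2 * κ) by positivity)
  set D := B + A
  have hD : 0 ≤ D := by linarith [hB w₀ hw₀, norm_nonneg w₀]
  have hC : 0 ≤ D / τ.im + 2 * D / R := by positivity
  refine ⟨2 + D / τ.im + 2 * D / R, by linarith, fun n r hn w hw => ?_⟩
  set X : ℂ := (r : ℂ) + (n : ℂ) * τ
  have hcone : (n + r) * (τ.im / (2 * κ)) ≤ ‖X‖ / 2 := by
    rw [← mul_div_assoc, div_le_div_iff₀ (by positivity) two_pos]
    nlinarith [natCast_add_mul_im_le_norm hτ.le n r]
  have hX : τ.im ≤ ‖X‖ := by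
    have : (1 : ℝ) ≤ n := by exact_mod_cast hn
    nlinarith [natCast_mul_im_le_norm τ n r]
  have hz : R ≤ ‖F^[r] (G^[n] w)‖ := hS _ (hFS.iterate r (hGS.iterate n (hKS hw)))
  refine norm_comparable_of_norm_sub_le hτ hR hD hX hz ?_
  calc ‖F^[r] (G^[n] w) - X‖ = ‖(F^[r] (G^[n] w) - w - X) + w‖ := by ring_nf
    _ ≤ ‖F^[r] (G^[n] w) - w - X‖ + ‖w‖ := norm_add_le _ _
    _ ≤ ‖X‖ / 2 + D := by linarith [hB w hw, hA w (hKS hw) n r]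
end
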